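/- Let d ≥ 1, R ∈ (0,1], and let η : ℝ → ℝ be a smooth non-decreasing function with 0 ≤ η ≤ R/6, η(t) = t for 0 ≤ t ≤ R/8, and η(t) = R/6 for t ≥ R/5. Let V ⊂ ℝ^d be a finite R-separated set and define r_V(x) := η(dist(x, V)). Then: (i) r_V is infinitely differentiable on ℝ^d ∖ V; (ii) for every p ∈ V and every x with |x − p| ≤ R/2 one has r_V(x) = η(|x − p|); (iii) r_V(x) = R/6 whenever dist(x, V) ≥ R/5. -/
import Mathlib


open Metric Set

/-- The regularized distance-to-`V` weight `r_V(x) = η(dist(x, V))`. -/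
noncomputable def rV {d : ℕ} (η : ℝ → ℝ) (V : Finset (EuclideanSpace ℝ (Fin d)))
    (x : EuclideanSpace ℝ (Fin d)) : ℝ :=
  η (Metric.infDist x (V : Set (EuclideanSpace ℝ (Fin d))))

theorem stmt0 {d : ℕ} (hd : 1 ≤ d) {R : ℝ} (hR0 : 0 < R) (hR1 : R ≤ 1)
    (η : ℝ → ℝ) (hη : ContDiff ℝ (⊤ : ℕ∞) η) (hmono : Monotone η)
    (hη0 : ∀ t, 0 ≤ η t) (hη6 : ∀ t, η t ≤ R / 6)
    (hsmall : ∀ t, 0 ≤ t → t ≤ R / 8 → η t = t)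
    (hlarge : ∀ t, R / 5 ≤ t → η t = R / 6)
    (V : Finset (EuclideanSpace ℝ (Fin d))) (hVne : V.Nonempty)
    (hsep : ∀ p ∈ V, ∀ q ∈ V, p ≠ q → R ≤ dist p q) :
    -- (i) `r_V` is smooth on `ℝ^d ∖ V`
    ContDiffOn ℝ (⊤ : ℕ∞) (rV η V) ((V : Set (EuclideanSpace ℝ (Fin d)))ᶜ) ∧
    -- (ii) near each `p ∈ V`, `r_V(x) = η(|x - p|)`
    (∀ p ∈ V, ∀ x : EuclideanSpace ℝ (Fin d), dist x p ≤ R / 2 → rV η V x = η (dist x p)) ∧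
    -- (iii) `r_V(x) = R/6` far from `V`
    (∀ x : EuclideanSpace ℝ (Fin d),
      R / 5 ≤ Metric.infDist x (V : Set (EuclideanSpace ℝ (Fin d))) → rV η V x = R / 6) := by
  have hVSne : (V : Set (EuclideanSpace ℝ (Fin d))).Nonempty := by
    exact_mod_cast hVne
  have hVc : IsCompact (V : Set (EuclideanSpace ℝ (Fin d))) := V.finite_toSet.isCompact
  have hVcl : IsClosed (V : Set (EuclideanSpace ℝ (Fin d))) := V.finite_toSet.isClosed
  -- key: infDist equals dist to p when close to p
  have key : ∀ p ∈ V, ∀ x : EuclideanSpace ℝ (Fin d), dist x p ≤ R / 2 →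
      Metric.infDist x (V : Set (EuclideanSpace ℝ (Fin d))) = dist x p := by
    intro p hp x hx
    have h1 : Metric.infDist x ↑V ≤ dist x p := infDist_le_dist_of_mem (by exact_mod_cast hp)
    obtain ⟨q, hq, hqd⟩ := hVc.exists_infDist_eq_dist hVSne x
    rw [Finset.mem_coe] at hq
    by_cases hqp : q = p
    · rw [hqd, hqp]
    · have hsepq : R ≤ dist q p := hsep q hq p hp hqp
      have htri : dist q p ≤ dist q x + dist x p := dist_triangle q x p
      have : dist x p ≤ dist x q := by rw [dist_comm q x] at htri; linarith
      rw [hqd] at h1 ⊢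
      linarith
  have part2 : ∀ p ∈ V, ∀ x : EuclideanSpace ℝ (Fin d), dist x p ≤ R / 2 →
      rV η V x = η (dist x p) := by
    intro p hp x hx
    unfold rV
    rw [key p hp x hx]
  refine ⟨?_, part2, ?_⟩
  · intro x hx
    have hxV : x ∉ (V : Set (EuclideanSpace ℝ (Fin d))) := hx
    have hpos : 0 < Metric.infDist x ↑V := (hVcl.notMem_iff_infDist_pos hVSne).mp hxV
    set δ := Metric.infDist x (V : Set (EuclideanSpace ℝ (Fin d))) with hδ
    apply ContDiffAt.contDiffWithinAt
    rcases lt_or_ge δ (R / 2) with hcase | hcase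
    · -- close to some p
      obtain ⟨p, hp, hpd⟩ := hVc.exists_infDist_eq_dist hVSne x
      rw [Finset.mem_coe] at hp
      have hε : 0 < min δ (R / 2 - δ) := lt_min hpos (by linarith)
      have hxp : x ≠ p := dist_pos.mp (hpd ▸ hpos)
      have hsm : ContDiffAt ℝ (⊤ : ℕ∞) (fun y => η (dist y p)) x := by
        exact hη.contDiffAt.comp x (ContDiffAt.dist ℝ contDiffAt_id contDiffAt_const hxp)
      apply hsm.congr_of_eventuallyEq
      filter_upwards [Metric.ball_mem_nhds x hε] with y hy
      rw [Metric.mem_ball] at hy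
      have hy2 : dist y x < R / 2 - δ := lt_of_lt_of_le hy (min_le_right _ _)
      have : dist y p ≤ R / 2 := by
        have := dist_triangle y x p
        rw [← hpd] at this
        linarith
      exact part2 p hp y this
    · -- far from V : constant R/6 nearby
      have hε : 0 < δ - R / 5 := by linarith
      have hsm : ContDiffAt ℝ (⊤ : ℕ∞) (fun _ : EuclideanSpace ℝ (Fin d) => R / 6) x :=
        contDiffAt_const
      apply hsm.congr_of_eventuallyEq
      filter_upwards [Metric.ball_mem_nhds x hε] with y hy
      rw [Metric.mem_ball] at hy
      have hi : δ ≤ Metric.infDist y ↑V + dist x y :=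
        Metric.infDist_le_infDist_add_dist
      rw [dist_comm y x] at hy
      have : R / 5 ≤ Metric.infDist y ↑V := by linarith
      unfold rV
      exact hlarge _ this
  · intro x hx
    unfold rV
    exact hlarge _ hx
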